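/- arXiv:2204.02847 — 2 statements merged into one kernel-verified Lean document; each statement's English description precedes it below -/
import Mathlib

section
/- Let k be a field and s > t ≥ 3, y ≥ 3 integers. Let X = J_s ⊕ J_t ⊕ J_1 and Y = J_y ⊕ J_2, and let C : X → Y be the k[T]-linear map with components: multiplication by T^{y−2} from J_s to J_y and from J_t to J_y; the canonical reduction map from J_t to J_2; multiplication by T from J_1 to J_2; and zero from J_1 to J_y and from J_s to J_2. Then T²∘C = 0 and the triple (X, Y, C) is indecomposable. (In the paper this is the family with (s, t) = (m, k) for 3 ≤ k ≤ m−1 and 3 ≤ y ≤ n.) -/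
open Polynomial

/-- `J K a` is the `K[T]`-module `K[T]/(T^a)` (with `T` the polynomial variable `X`). -/
abbrev J (K : Type*) [Field K] (a : ℕ) : Type _ :=
  Polynomial K ⧸ Ideal.span {(X : Polynomial K) ^ a}

/-- Multiplication by `T^e` as a `K[T]`-linear map `J_a → J_b`; it is well defined
when `b ≤ e + a`, and we set it to `0` otherwise. -/
noncomputable def mulTpow (K : Type*) [Field K] (a b e : ℕ) :
    J K a →ₗ[Polynomial K] J K b :=
  if h : b ≤ e + a then
    Submodule.liftQ (Ideal.span {(X : Polynomial K) ^ a})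
      ((Ideal.span {(X : Polynomial K) ^ b}).mkQ ∘ₗ
        ((X : Polynomial K) ^ e • (LinearMap.id : Polynomial K →ₗ[Polynomial K] Polynomial K)))
      (by
        refine Submodule.span_le.mpr ?_
        intro x hx
        rw [Set.mem_singleton_iff] at hx
        subst hx
        simp only [SetLike.mem_coe, LinearMap.mem_ker, LinearMap.comp_apply,
          LinearMap.smul_apply, LinearMap.id_apply, Submodule.mkQ_apply,
          Submodule.Quotient.mk_eq_zero, smul_eq_mul]
        exact Ideal.mem_span_singleton.mpr (by
          rw [← pow_add]; exact pow_dvd_pow X h))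
  else 0

/-- A triple `(M, N, C)` is indecomposable if `M ⊕ N ≠ 0` and the only idempotent
endomorphism pairs `(F, G)` (i.e. `G ∘ C = C ∘ F`, `F² = F`, `G² = G`) are `(0, 0)` and
`(id, id)`. -/
def TripleIndecomposable {K : Type*} [Field K] {M N : Type*}
    [AddCommGroup M] [Module (Polynomial K) M]
    [AddCommGroup N] [Module (Polynomial K) N] (C : M →ₗ[Polynomial K] N) : Prop :=
  (Nontrivial M ∨ Nontrivial N) ∧
  ∀ (F : M →ₗ[Polynomial K] M) (G : N →ₗ[Polynomial K] N),
    G ∘ₗ C = C ∘ₗ F → F ∘ₗ F = F → G ∘ₗ G = G →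
      (F = 0 ∧ G = 0) ∨ (F = LinearMap.id ∧ G = LinearMap.id)

/-!
Let `e₁, e₂, e₃` and `f₁, f₂` be the generators `1` of the summands of the source
`J_s ⊕ J_t ⊕ J_1` and the target `J_y ⊕ J_2`, so `C e₁ = T^(y-2) f₁`, `C e₂ = T^(y-2) f₁ + f₂`
and `C e₃ = T f₂`. For an endomorphism `(F, G)` of the triple, comparing coefficients in
`G (C eᵢ) = C (F eᵢ)`, together with `T^t e₂ = T e₃ = T² f₂ = 0`, shows that modulo `T` both
`F` and `G` act on the generators as `λ • id` plus a strictly lower triangular part, with the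
same `λ`. Idempotency forces `λ ∈ {0, 1}` and kills the triangular parts; then `F` (if `λ = 0`)
or `id - F` (if `λ = 1`) is an idempotent with image in `T • M`, hence zero since `T` is
nilpotent on `M`, and likewise for `G`.
-/

namespace J

variable {K : Type*} [Field K] {a b e i m : ℕ}

noncomputable abbrev mk (K : Type*) [Field K] (a : ℕ) : K[X] →+* J K a :=
  Ideal.Quotient.mk _

theorem mk_surjective : Function.Surjective (mk K a) :=
  Ideal.Quotient.mk_surjective

theorem smul_mk (p q : K[X]) : p • mk K a q = mk K a (p * q) :=
  rfl

theorem mk_eq_zero_of_dvd {p : K[X]} (h : X ^ a ∣ p) : mk K a p = 0 :=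
  Ideal.Quotient.eq_zero_iff_mem.2 (Ideal.mem_span_singleton.2 h)

noncomputable def coeff (a i : ℕ) : J K a →ₗ[K] K :=
  (lcoeff K i).comp (AdjoinRoot.modByMonicHom (monic_X_pow a) : J K a →ₗ[K] K[X])

theorem coeff_mk (h : i < a) (p : K[X]) : coeff a i (mk K a p) = p.coeff i := by
  change (p %ₘ X ^ a).coeff i = _
  rw [modByMonic_eq_sub_mul_div p (X ^ a), coeff_sub, mul_comm,
    coeff_mul_X_pow', if_neg (not_le.2 h), sub_zero]

theorem coeff_one (ha : 0 < a) : coeff a 0 (1 : J K a) = 1 := by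
  rw [← map_one (mk K a), coeff_mk ha, coeff_one_zero]

theorem smul_one (p : K[X]) : p • (1 : J K a) = mk K a p := by
  rw [← map_one (mk K a), smul_mk, mul_one]

theorem coeff_zero_smul (ha : 0 < a) (p : K[X]) (x : J K a) :
    coeff a 0 (p • x) = p.coeff 0 * coeff a 0 x := by
  obtain ⟨q, rfl⟩ := mk_surjective x
  rw [smul_mk, coeff_mk ha, coeff_mk ha, mul_coeff_zero]

theorem coeff_X_pow_smul (h : e + i < a) (x : J K a) :
    coeff a (e + i) ((X ^ e : K[X]) • x) = coeff a i x := by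
  obtain ⟨q, rfl⟩ := mk_surjective x
  rw [smul_mk, coeff_mk h, coeff_mk (by omega), add_comm, coeff_X_pow_mul]

theorem coeff_X_smul (h : i + 1 < a) (x : J K a) :
    coeff a (i + 1) ((X : K[X]) • x) = coeff a i x := by
  simpa [add_comm] using coeff_X_pow_smul (e := 1) (by omega) x

theorem coeff_X_pow_smul_of_lt (hi : i < e) (ha : i < a) (x : J K a) :
    coeff a i ((X ^ e : K[X]) • x) = 0 := by
  obtain ⟨q, rfl⟩ := mk_surjective x
  rw [smul_mk, coeff_mk ha, mul_comm, coeff_mul_X_pow', if_neg (not_le.2 hi)]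

theorem X_pow_smul_eq_zero (h : a ≤ m) (x : J K a) : (X ^ m : K[X]) • x = 0 := by
  obtain ⟨q, rfl⟩ := mk_surjective x
  exact mk_eq_zero_of_dvd (dvd_mul_of_dvd_left (pow_dvd_pow X h) q)

theorem coeff_eq_zero_of_X_pow_smul_eq_zero {x : J K a} (h : (X ^ m : K[X]) • x = 0)
    (hi : i + m < a) : coeff a i x = 0 := by
  rw [← coeff_X_pow_smul (e := m) (by omega), h, map_zero]

theorem exists_eq_X_smul_of_coeff_zero_eq_zero (ha : 0 < a) {x : J K a}
    (h : coeff a 0 x = 0) : ∃ w : J K a, x = (X : K[X]) • w := by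
  obtain ⟨q, rfl⟩ := mk_surjective x
  rw [coeff_mk ha] at h
  obtain ⟨d, rfl⟩ := X_dvd_iff.2 h
  exact ⟨mk K a d, rfl⟩

theorem nontrivial (ha : 0 < a) : Nontrivial (J K a) :=
  ⟨⟨mk K a 1, 0, fun h => one_ne_zero <| by
    simpa only [coeff_mk ha, coeff_one_zero, map_zero] using congrArg (coeff a 0) h⟩⟩

theorem mulTpow_mk (h : b ≤ e + a) (p : K[X]) :
    mulTpow K a b e (mk K a p) = (X ^ e : K[X]) • mk K b p := by
  rw [mulTpow, dif_pos h]
  rfl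

theorem mulTpow_one (h : b ≤ e + a) : mulTpow K a b e 1 = (X ^ e : K[X]) • (1 : J K b) := by
  rw [← map_one (mk K a), mulTpow_mk h, map_one]

theorem coeff_mulTpow (h : b ≤ e + a) (hi : e + i < b) (x : J K a) :
    coeff b (e + i) (mulTpow K a b e x) = coeff a i x := by
  obtain ⟨q, rfl⟩ := mk_surjective x
  rw [mulTpow_mk h, coeff_X_pow_smul hi, coeff_mk (by omega), coeff_mk (by omega)]

theorem coeff_mulTpow_of_lt (h : b ≤ e + a) (hi : i < e) (hb : i < b) (x : J K a) :
    coeff b i (mulTpow K a b e x) = 0 := by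
  obtain ⟨q, rfl⟩ := mk_surjective x
  rw [mulTpow_mk h, coeff_X_pow_smul_of_lt hi hb]

theorem X_pow_smul_mulTpow_eq_zero (h : b ≤ e + m) (x : J K a) :
    (X ^ m : K[X]) • mulTpow K a b e x = 0 := by
  by_cases hba : b ≤ e + a
  · obtain ⟨q, rfl⟩ := mk_surjective x
    rw [mulTpow_mk hba, smul_smul, smul_mk, ← pow_add]
    exact mk_eq_zero_of_dvd (dvd_mul_of_dvd_left (pow_dvd_pow X (by omega)) q)
  · rw [mulTpow, dif_neg hba, LinearMap.zero_apply, smul_zero]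

end J

namespace IsIdempotentElem

section Semiring

variable {R M : Type*} [Semiring R] [AddCommMonoid M] [Module R M] {r : R} {n : ℕ}
  {F : Module.End R M}

theorem eq_zero_of_forall_exists_eq_smul (hF : IsIdempotentElem F)
    (hn : ∀ x : M, r ^ n • x = 0) (h : ∀ x, ∃ z, F x = r • z) : F = 0 := by
  have hFF : ∀ x, F (F x) = F x := fun x => LinearMap.congr_fun hF.eq x
  have hpow : ∀ m x, ∃ z, F x = r ^ m • F z := by
    intro m
    induction m with
    | zero => exact fun x => ⟨x, by rw [pow_zero, one_smul]⟩
    | succ m ih =>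
      intro x
      obtain ⟨z, hz⟩ := ih x
      obtain ⟨w, hw⟩ := h z
      refine ⟨w, ?_⟩
      rw [← hFF x, hz, hw, smul_smul, ← pow_succ, map_smul]
  ext x
  obtain ⟨z, hz⟩ := hpow n x
  rw [hz, hn, LinearMap.zero_apply]

theorem eq_zero_of_map_apply_eq_zero {Φ V : Type*} [Zero V] [FunLike Φ M V] (τ : Φ)
    (hF : IsIdempotentElem F) (hn : ∀ x : M, r ^ n • x = 0)
    (hτ : ∀ x, τ x = 0 → ∃ z, x = r • z) (h : ∀ x, τ (F x) = 0) : F = 0 :=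
  hF.eq_zero_of_forall_exists_eq_smul hn fun x => hτ _ (h x)

end Semiring

theorem eq_one_of_map_apply_eq {R M Φ V : Type*} [Ring R] [AddCommGroup M] [Module R M] {r : R}
    {n : ℕ} {F : Module.End R M} [AddCommGroup V] [FunLike Φ M V] [AddMonoidHomClass Φ M V]
    (τ : Φ) (hF : IsIdempotentElem F)
    (hn : ∀ x : M, r ^ n • x = 0) (hτ : ∀ x, τ x = 0 → ∃ z, x = r • z)
    (h : ∀ x, τ (F x) = τ x) : F = 1 := by
  refine (sub_eq_zero.1 (hF.one_sub.eq_zero_of_map_apply_eq_zero τ hn hτ fun x => ?_)).symm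
  rw [LinearMap.sub_apply, Module.End.one_apply, map_sub, h, sub_self]

theorem eq_zero_of_mul_add_mul_eq {R : Type*} [CommRing R] {c x : R}
    (hc : IsIdempotentElem c) (h : c * x + x * c = x) : x = 0 := by
  linear_combination (2 * c - 1) * h - 4 * x * hc.eq

end IsIdempotentElem

namespace Triple2x3

variable {K : Type*} [Field K] {s t y : ℕ}

abbrev Src (K : Type*) [Field K] (s t : ℕ) : Type _ := J K s × J K t × J K 1

abbrev Tgt (K : Type*) [Field K] (y : ℕ) : Type _ := J K y × J K 2

namespace Src

noncomputable def e₁ : Src K s t := (1, 0, 0)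
noncomputable def e₂ : Src K s t := (0, 1, 0)
noncomputable def e₃ : Src K s t := (0, 0, 1)

noncomputable def residue : Src K s t →ₗ[K] K × K × K :=
  (J.coeff s 0).prodMap ((J.coeff t 0).prodMap (J.coeff 1 0))

theorem residue_apply (z : Src K s t) :
    residue z = (J.coeff s 0 z.1, J.coeff t 0 z.2.1, J.coeff 1 0 z.2.2) :=
  rfl

theorem residue_smul (hs : 0 < s) (ht : 0 < t) (p : K[X]) (z : Src K s t) :
    residue (p • z) = p.coeff 0 • residue z := by
  simp only [residue_apply, Prod.smul_fst, Prod.smul_snd, J.coeff_zero_smul hs,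
    J.coeff_zero_smul ht, J.coeff_zero_smul one_pos, Prod.smul_mk, smul_eq_mul]

theorem residue_e₁ (hs : 0 < s) : residue (e₁ : Src K s t) = (1, 0, 0) := by
  simp [residue_apply, e₁, J.coeff_one hs]

theorem residue_e₂ (ht : 0 < t) : residue (e₂ : Src K s t) = (0, 1, 0) := by
  simp [residue_apply, e₂, J.coeff_one ht]

theorem residue_e₃ : residue (e₃ : Src K s t) = (0, 0, 1) := by
  simp [residue_apply, e₃, J.coeff_one one_pos]

theorem exists_eq_smul_add (z : Src K s t) :
    ∃ p q r : K[X], z = p • e₁ + q • e₂ + r • e₃ := by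
  obtain ⟨z₁, z₂, z₃⟩ := z
  obtain ⟨p, rfl⟩ := J.mk_surjective z₁
  obtain ⟨q, rfl⟩ := J.mk_surjective z₂
  obtain ⟨r, rfl⟩ := J.mk_surjective z₃
  refine ⟨p, q, r, ?_⟩
  simp [e₁, e₂, e₃, J.smul_one]

theorem residue_apply_linearMap (hs : 0 < s) (ht : 0 < t) (F : Module.End K[X] (Src K s t))
    (z : Src K s t) :
    residue (F z) = (residue z).1 • residue (F e₁) + (residue z).2.1 • residue (F e₂) +
      (residue z).2.2 • residue (F e₃) := by
  obtain ⟨p, q, r, rfl⟩ := exists_eq_smul_add z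
  simp only [map_add, map_smul, residue_smul hs ht, residue_e₁ hs, residue_e₂ ht, residue_e₃]
  simp

theorem exists_eq_X_smul_of_residue_eq_zero (hs : 0 < s) (ht : 0 < t) (z : Src K s t)
    (h : residue z = 0) : ∃ w, z = (X : K[X]) • w := by
  simp only [residue_apply, Prod.mk_eq_zero] at h
  obtain ⟨w₁, hw₁⟩ := J.exists_eq_X_smul_of_coeff_zero_eq_zero hs h.1
  obtain ⟨w₂, hw₂⟩ := J.exists_eq_X_smul_of_coeff_zero_eq_zero ht h.2.1
  obtain ⟨w₃, hw₃⟩ := J.exists_eq_X_smul_of_coeff_zero_eq_zero one_pos h.2.2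
  exact ⟨(w₁, w₂, w₃), Prod.ext hw₁ (Prod.ext hw₂ hw₃)⟩

theorem X_pow_smul_eq_zero (ht : t ≤ s) (hs : 1 ≤ s) (z : Src K s t) :
    (X ^ s : K[X]) • z = 0 :=
  Prod.ext (J.X_pow_smul_eq_zero le_rfl _)
    (Prod.ext (J.X_pow_smul_eq_zero ht _) (J.X_pow_smul_eq_zero hs _))

theorem X_pow_smul_e₂ : (X ^ t : K[X]) • (e₂ : Src K s t) = 0 :=
  Prod.ext (smul_zero _) (Prod.ext (J.X_pow_smul_eq_zero le_rfl 1) (smul_zero _))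

theorem X_smul_e₃ : (X : K[X]) • (e₃ : Src K s t) = 0 :=
  Prod.ext (smul_zero _) (Prod.ext (smul_zero _)
    (show (X : K[X]) • (1 : J K 1) = 0 by
      simpa only [pow_one] using J.X_pow_smul_eq_zero (K := K) (m := 1) le_rfl 1))

theorem residue_eq_smul_of_isIdempotentElem (hs : 0 < s) (ht : 0 < t)
    {F : Module.End K[X] (Src K s t)} (hF : IsIdempotentElem F) {c a b : K}
    (h₁ : residue (F e₁) = (c, 0, a)) (h₂ : residue (F e₂) = (0, c, b))
    (h₃ : residue (F e₃) = (0, 0, c)) :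
    IsIdempotentElem c ∧ ∀ z, residue (F z) = c • residue z := by
  have hFF : ∀ z, F (F z) = F z := fun z => LinearMap.congr_fun hF.eq z
  have hF₁ := residue_apply_linearMap hs ht F (F e₁)
  have hF₂ := residue_apply_linearMap hs ht F (F e₂)
  rw [hFF, h₁, h₂, h₃] at hF₁ hF₂
  simp only [Prod.ext_iff, Prod.smul_mk, Prod.fst_add, Prod.snd_add, smul_eq_mul] at hF₁ hF₂
  have hc : IsIdempotentElem c := by simpa [IsIdempotentElem] using hF₁.1.symm
  have ha : a = 0 := hc.eq_zero_of_mul_add_mul_eq (by simpa using hF₁.2.2.symm)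
  have hb : b = 0 := hc.eq_zero_of_mul_add_mul_eq (by simpa using hF₂.2.2.symm)
  refine ⟨hc, fun z => ?_⟩
  rw [residue_apply_linearMap hs ht, h₁, h₂, h₃, ha, hb]
  ext <;> simp [mul_comm]

end Src

namespace Tgt

noncomputable def f₁ : Tgt K y := (1, 0)
noncomputable def f₂ : Tgt K y := (0, 1)

noncomputable def residue : Tgt K y →ₗ[K] K × K :=
  (J.coeff y 0).prodMap (J.coeff 2 0)

theorem residue_apply (z : Tgt K y) : residue z = (J.coeff y 0 z.1, J.coeff 2 0 z.2) :=
  rfl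

theorem residue_smul (hy : 0 < y) (p : K[X]) (z : Tgt K y) :
    residue (p • z) = p.coeff 0 • residue z := by
  simp only [residue_apply, Prod.smul_fst, Prod.smul_snd, J.coeff_zero_smul hy,
    J.coeff_zero_smul two_pos, Prod.smul_mk, smul_eq_mul]

theorem residue_f₁ (hy : 0 < y) : residue (f₁ : Tgt K y) = (1, 0) := by
  simp [residue_apply, f₁, J.coeff_one hy]

theorem residue_f₂ : residue (f₂ : Tgt K y) = (0, 1) := by
  simp [residue_apply, f₂, J.coeff_one two_pos]

theorem exists_eq_smul_add (z : Tgt K y) : ∃ p q : K[X], z = p • f₁ + q • f₂ := by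
  obtain ⟨z₁, z₂⟩ := z
  obtain ⟨p, rfl⟩ := J.mk_surjective z₁
  obtain ⟨q, rfl⟩ := J.mk_surjective z₂
  exact ⟨p, q, by simp [f₁, f₂, J.smul_one]⟩

theorem residue_apply_linearMap (hy : 0 < y) (G : Module.End K[X] (Tgt K y)) (z : Tgt K y) :
    residue (G z) = (residue z).1 • residue (G f₁) + (residue z).2 • residue (G f₂) := by
  obtain ⟨p, q, rfl⟩ := exists_eq_smul_add z
  simp only [map_add, map_smul, residue_smul hy, residue_f₁ hy, residue_f₂]
  simp

theorem exists_eq_X_smul_of_residue_eq_zero (hy : 0 < y) (z : Tgt K y) (h : residue z = 0) :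
    ∃ w, z = (X : K[X]) • w := by
  simp only [residue_apply, Prod.mk_eq_zero] at h
  obtain ⟨w₁, hw₁⟩ := J.exists_eq_X_smul_of_coeff_zero_eq_zero hy h.1
  obtain ⟨w₂, hw₂⟩ := J.exists_eq_X_smul_of_coeff_zero_eq_zero two_pos h.2
  exact ⟨(w₁, w₂), Prod.ext hw₁ hw₂⟩

theorem X_pow_smul_eq_zero (hy : 2 ≤ y) (z : Tgt K y) : (X ^ y : K[X]) • z = 0 :=
  Prod.ext (J.X_pow_smul_eq_zero le_rfl _) (J.X_pow_smul_eq_zero hy _)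

theorem X_sq_smul_f₂ : (X ^ 2 : K[X]) • (f₂ : Tgt K y) = 0 :=
  Prod.ext (smul_zero _) (J.X_pow_smul_eq_zero le_rfl 1)

theorem residue_eq_smul_of_isIdempotentElem (hy : 0 < y)
    {G : Module.End K[X] (Tgt K y)} (hG : IsIdempotentElem G) {c d : K}
    (h₁ : residue (G f₁) = (c, d)) (h₂ : residue (G f₂) = (0, c)) :
    IsIdempotentElem c ∧ ∀ z, residue (G z) = c • residue z := by
  have hGG : ∀ z, G (G z) = G z := fun z => LinearMap.congr_fun hG.eq z
  have hG₁ := residue_apply_linearMap hy G (G f₁)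
  rw [hGG, h₁, h₂] at hG₁
  simp only [Prod.ext_iff, Prod.smul_mk, Prod.fst_add, Prod.snd_add, smul_eq_mul] at hG₁
  have hc : IsIdempotentElem c := by simpa [IsIdempotentElem] using hG₁.1.symm
  have hd : d = 0 := hc.eq_zero_of_mul_add_mul_eq (by simpa using hG₁.2.symm)
  refine ⟨hc, fun z => ?_⟩
  rw [residue_apply_linearMap hy, h₁, h₂, hd]
  ext <;> simp [mul_comm]

end Tgt

noncomputable def C (K : Type*) [Field K] (s t y : ℕ) : Src K s t →ₗ[K[X]] Tgt K y :=
  LinearMap.prod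
    ((mulTpow K s y (y - 2)).coprod
      ((mulTpow K t y (y - 2)).coprod (0 : J K 1 →ₗ[K[X]] J K y)))
    ((0 : J K s →ₗ[K[X]] J K 2).coprod
      ((mulTpow K t 2 0).coprod (mulTpow K 1 2 1)))

theorem C_apply (z : Src K s t) :
    C K s t y z = (mulTpow K s y (y - 2) z.1 + mulTpow K t y (y - 2) z.2.1,
      mulTpow K t 2 0 z.2.1 + mulTpow K 1 2 1 z.2.2) := by
  simp [C]

theorem X_sq_smul_C (z : Src K s t) : (X ^ 2 : K[X]) • C K s t y z = 0 := by
  simp only [C_apply, Prod.smul_mk, smul_add, Prod.mk_eq_zero]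
  refine ⟨?_, ?_⟩ <;>
    rw [J.X_pow_smul_mulTpow_eq_zero (by omega), J.X_pow_smul_mulTpow_eq_zero (by omega), add_zero]

theorem C_e₁ (hs : 2 ≤ s) : C K s t y Src.e₁ = (X ^ (y - 2) : K[X]) • Tgt.f₁ := by
  simp [C_apply, Src.e₁, Tgt.f₁, J.mulTpow_one (show y ≤ y - 2 + s by omega)]

theorem C_e₂ (ht : 2 ≤ t) : C K s t y Src.e₂ = (X ^ (y - 2) : K[X]) • Tgt.f₁ + Tgt.f₂ := by
  simp [C_apply, Src.e₂, Tgt.f₁, Tgt.f₂, J.mulTpow_one (show y ≤ y - 2 + t by omega),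
    J.mulTpow_one (show 2 ≤ 0 + t by omega)]

theorem C_e₃ : C K s t y Src.e₃ = (X : K[X]) • Tgt.f₂ := by
  simp [C_apply, Src.e₃, Tgt.f₂, J.mulTpow_one (show 2 ≤ 1 + 1 by omega)]

theorem coeff_C_fst (hs : 2 ≤ s) (ht : 2 ≤ t) {i : ℕ} (hi : y - 2 + i < y) (z : Src K s t) :
    J.coeff y (y - 2 + i) (C K s t y z).1 = J.coeff s i z.1 + J.coeff t i z.2.1 := by
  rw [C_apply, map_add, J.coeff_mulTpow (by omega) hi, J.coeff_mulTpow (by omega) hi]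

theorem coeff_C_snd_zero (ht : 2 ≤ t) (z : Src K s t) :
    J.coeff 2 0 (C K s t y z).2 = J.coeff t 0 z.2.1 := by
  rw [C_apply, map_add, J.coeff_mulTpow_of_lt (by omega) one_pos two_pos, add_zero]
  exact J.coeff_mulTpow (e := 0) (i := 0) (by omega) two_pos _

theorem coeff_C_snd_one (ht : 2 ≤ t) (z : Src K s t) :
    J.coeff 2 1 (C K s t y z).2 = J.coeff t 1 z.2.1 + J.coeff 1 0 z.2.2 := by
  have h₂ := J.coeff_mulTpow (b := 2) (e := 0) (i := 1) (by omega) (by omega) z.2.1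
  have h₃ := J.coeff_mulTpow (b := 2) (e := 1) (i := 0) (by omega) (by omega) z.2.2
  rw [zero_add] at h₂
  rw [C_apply, map_add, h₂, h₃]

theorem coeff_of_X_pow_smul_eq_C (hs : 2 ≤ s) (ht : 2 ≤ t) (hy : 3 ≤ y) {u : Tgt K y}
    {z : Src K s t} (h : (X ^ (y - 2) : K[X]) • u = C K s t y z) :
    J.coeff t 0 z.2.1 = 0 ∧ J.coeff y 0 u.1 = J.coeff s 0 z.1 := by
  have h₁ : J.coeff y (y - 2 + 0) ((X ^ (y - 2) : K[X]) • u).1 =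
      J.coeff y (y - 2 + 0) (C K s t y z).1 := by rw [h]
  have h₂ : J.coeff 2 0 ((X ^ (y - 2) : K[X]) • u).2 = J.coeff 2 0 (C K s t y z).2 := by rw [h]
  rw [Prod.smul_fst, J.coeff_X_pow_smul (by omega), coeff_C_fst hs ht (by omega)] at h₁
  rw [Prod.smul_snd, J.coeff_X_pow_smul_of_lt (by omega) two_pos, coeff_C_snd_zero ht] at h₂
  exact ⟨h₂.symm, by rw [h₁, ← h₂, add_zero]⟩

theorem coeff_of_X_smul_eq_C (hs : 3 ≤ s) (ht : 3 ≤ t) (hy : 2 ≤ y) {v : Tgt K y}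
    {z : Src K s t} (h : (X : K[X]) • v = C K s t y z) (hz : (X : K[X]) • z = 0) :
    Src.residue z = (0, 0, J.coeff 2 0 v.2) ∧ J.coeff y (y - 2) v.1 = 0 := by
  have hz' : (X ^ 1 : K[X]) • z = 0 := by simpa only [pow_one] using hz
  have hz₁ : ∀ i, i + 1 < s → J.coeff s i z.1 = 0 := fun i hi =>
    J.coeff_eq_zero_of_X_pow_smul_eq_zero (congrArg Prod.fst hz') hi
  have hz₂ : ∀ i, i + 1 < t → J.coeff t i z.2.1 = 0 := fun i hi =>
    J.coeff_eq_zero_of_X_pow_smul_eq_zero (congrArg (·.2.1) hz') hi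
  have h₁ : J.coeff y (y - 2 + 1) ((X : K[X]) • v).1 =
      J.coeff y (y - 2 + 1) (C K s t y z).1 := by rw [h]
  have h₂ : J.coeff 2 (0 + 1) ((X : K[X]) • v).2 = J.coeff 2 1 (C K s t y z).2 := by rw [h]
  rw [Prod.smul_fst, J.coeff_X_smul (by omega), coeff_C_fst (by omega) (by omega) (by omega),
    hz₁ 1 (by omega), hz₂ 1 (by omega), add_zero] at h₁
  rw [Prod.smul_snd, J.coeff_X_smul (by omega), coeff_C_snd_one (by omega), hz₂ 1 (by omega),
    zero_add] at h₂
  rw [Src.residue_apply, hz₁ 0 (by omega), hz₂ 0 (by omega), h₂]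
  exact ⟨rfl, h₁⟩

theorem coeff_of_X_pow_smul_add_eq_C (hts : t < s) (ht : 2 ≤ t) (hy : 3 ≤ y) {u v : Tgt K y}
    {z : Src K s t} (h : (X ^ (y - 2) : K[X]) • u + v = C K s t y z)
    (hz : (X ^ t : K[X]) • z = 0) (hv : J.coeff y (y - 2) v.1 = 0) :
    J.coeff s 0 z.1 = 0 ∧ J.coeff t 0 z.2.1 = J.coeff y 0 u.1 ∧
      J.coeff 2 0 v.2 = J.coeff t 0 z.2.1 := by
  have hz₁ : J.coeff s 0 z.1 = 0 :=
    J.coeff_eq_zero_of_X_pow_smul_eq_zero (congrArg Prod.fst hz) (by omega)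
  have h₁ : J.coeff y (y - 2 + 0) ((X ^ (y - 2) : K[X]) • u + v).1 =
      J.coeff y (y - 2 + 0) (C K s t y z).1 := by rw [h]
  have h₂ : J.coeff 2 0 ((X ^ (y - 2) : K[X]) • u + v).2 = J.coeff 2 0 (C K s t y z).2 := by
    rw [h]
  rw [Prod.fst_add, map_add, Prod.smul_fst, J.coeff_X_pow_smul (by omega),
    coeff_C_fst (by omega) ht (by omega), add_zero, hv, add_zero, hz₁, zero_add] at h₁
  rw [Prod.snd_add, map_add, Prod.smul_snd, J.coeff_X_pow_smul_of_lt (by omega) two_pos,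
    zero_add, coeff_C_snd_zero ht] at h₂
  exact ⟨hz₁, h₁.symm, h₂⟩

theorem exists_residue_eq_of_comp_eq (hts : t < s) (ht : 3 ≤ t) (hy : 3 ≤ y)
    {F : Module.End K[X] (Src K s t)} {G : Module.End K[X] (Tgt K y)}
    (hGC : G ∘ₗ C K s t y = C K s t y ∘ₗ F) :
    ∃ c a b d : K, Src.residue (F Src.e₁) = (c, 0, a) ∧ Src.residue (F Src.e₂) = (0, c, b) ∧
      Src.residue (F Src.e₃) = (0, 0, c) ∧ Tgt.residue (G Tgt.f₁) = (c, d) ∧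
      Tgt.residue (G Tgt.f₂) = (0, c) := by
  have hGC' : ∀ z, G (C K s t y z) = C K s t y (F z) := LinearMap.congr_fun hGC
  have hU : (X ^ (y - 2) : K[X]) • G Tgt.f₁ = C K s t y (F Src.e₁) := by
    rw [← map_smul, ← C_e₁ (show 2 ≤ s by omega), hGC']
  have hV : (X ^ (y - 2) : K[X]) • G Tgt.f₁ + G Tgt.f₂ = C K s t y (F Src.e₂) := by
    rw [← map_smul, ← map_add, ← C_e₂ (show 2 ≤ t by omega), hGC']
  have hW : (X : K[X]) • G Tgt.f₂ = C K s t y (F Src.e₃) := by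
    rw [← map_smul, ← C_e₃, hGC']
  have hFe₂ : (X ^ t : K[X]) • F Src.e₂ = 0 := by rw [← map_smul, Src.X_pow_smul_e₂, map_zero]
  have hFe₃ : (X : K[X]) • F Src.e₃ = 0 := by rw [← map_smul, Src.X_smul_e₃, map_zero]
  have hGf₂ : (X ^ 2 : K[X]) • G Tgt.f₂ = 0 := by rw [← map_smul, Tgt.X_sq_smul_f₂, map_zero]
  obtain ⟨hF₁₂, hG₁₁⟩ := coeff_of_X_pow_smul_eq_C (by omega) (by omega) hy hU
  obtain ⟨hF₃, hG₂₁high⟩ := coeff_of_X_smul_eq_C (by omega) ht (by omega) hW hFe₃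
  obtain ⟨hF₂₁, hF₂₂, hG₂₂⟩ := coeff_of_X_pow_smul_add_eq_C hts (by omega) hy hV hFe₂ hG₂₁high
  have hG₂₁ : J.coeff y 0 (G Tgt.f₂).1 = 0 :=
    J.coeff_eq_zero_of_X_pow_smul_eq_zero (congrArg Prod.fst hGf₂) (by omega)
  refine ⟨J.coeff s 0 (F Src.e₁).1, J.coeff 1 0 (F Src.e₁).2.2, J.coeff 1 0 (F Src.e₂).2.2,
    J.coeff 2 0 (G Tgt.f₁).2, ?_, ?_, hF₃.trans ?_, ?_, ?_⟩
  · rw [Src.residue_apply, hF₁₂]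
  · rw [Src.residue_apply, hF₂₁, hF₂₂, hG₁₁]
  · rw [hG₂₂, hF₂₂, hG₁₁]
  · rw [Tgt.residue_apply, hG₁₁]
  · rw [Tgt.residue_apply, hG₂₁, hG₂₂, hF₂₂, hG₁₁]

end Triple2x3

/-- For `s > t ≥ 3`, `y ≥ 3`, the map `C : J_s ⊕ J_t ⊕ J_1 → J_y ⊕ J_2` with components
`T^{y-2} : J_s → J_y`, `T^{y-2} : J_t → J_y`, the canonical reduction `J_t → J_2`,
`T : J_1 → J_2`, and zero from `J_1` to `J_y` and from `J_s` to `J_2`, satisfies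
`T² ∘ C = 0`, and the triple `(J_s ⊕ J_t ⊕ J_1, J_y ⊕ J_2, C)` is indecomposable. -/
theorem triple_2x3_indecomposable (K : Type*) [Field K] (s t y : ℕ)
    (hts : t < s) (ht : 3 ≤ t) (hy : 3 ≤ y) :
    (∀ x, ((X : Polynomial K) ^ 2) •
      (LinearMap.prod
        ((mulTpow K s y (y - 2)).coprod
          ((mulTpow K t y (y - 2)).coprod (0 : J K 1 →ₗ[Polynomial K] J K y)))
        ((0 : J K s →ₗ[Polynomial K] J K 2).coprod
          ((mulTpow K t 2 0).coprod (mulTpow K 1 2 1)))) x = 0) ∧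
    TripleIndecomposable
      (LinearMap.prod
        ((mulTpow K s y (y - 2)).coprod
          ((mulTpow K t y (y - 2)).coprod (0 : J K 1 →ₗ[Polynomial K] J K y)))
        ((0 : J K s →ₗ[Polynomial K] J K 2).coprod
          ((mulTpow K t 2 0).coprod (mulTpow K 1 2 1)))) := by
  open Triple2x3 in
  refine ⟨X_sq_smul_C, Or.inl ?_,
    fun F G hGC (hF : IsIdempotentElem F) (hG : IsIdempotentElem G) => ?_⟩
  · have := J.nontrivial (K := K) (a := s) (by omega)
    infer_instance
  obtain ⟨c, a, b, d, hF₁, hF₂, hF₃, hG₁, hG₂⟩ := exists_residue_eq_of_comp_eq hts ht hy hGC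
  obtain ⟨hc, hFc⟩ := Src.residue_eq_smul_of_isIdempotentElem (by omega) (by omega) hF hF₁ hF₂ hF₃
  obtain ⟨-, hGc⟩ := Tgt.residue_eq_smul_of_isIdempotentElem (by omega) hG hG₁ hG₂
  have hXF := Src.X_pow_smul_eq_zero (K := K) hts.le (by omega)
  have hXG := Tgt.X_pow_smul_eq_zero (K := K) (y := y) (by omega)
  have hτF :=
    Src.exists_eq_X_smul_of_residue_eq_zero (K := K) (s := s) (t := t) (by omega) (by omega)
  have hτG := Tgt.exists_eq_X_smul_of_residue_eq_zero (K := K) (y := y) (by omega)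
  rcases IsIdempotentElem.iff_eq_zero_or_one.1 hc with rfl | rfl
  · simp only [zero_smul] at hFc hGc
    exact Or.inl ⟨hF.eq_zero_of_map_apply_eq_zero _ hXF hτF hFc,
      hG.eq_zero_of_map_apply_eq_zero _ hXG hτG hGc⟩
  · simp only [one_smul] at hFc hGc
    exact Or.inr ⟨hF.eq_one_of_map_apply_eq _ hXF hτF hFc, hG.eq_one_of_map_apply_eq _ hXG hτG hGc⟩
end

section
/- Let k be a field and s > t ≥ 3, x > y ≥ 3 integers. Let X = J_s ⊕ J_t ⊕ J_1 and Y = J_x ⊕ J_y ⊕ J_2, and let C : X → Y be the k[T]-linear map with components: multiplication by T^{x−2} from J_s to J_x; multiplication by T^{y−2} from J_s to J_y and from J_t to J_y; the canonical reduction map from J_t to J_2; multiplication by T from J_1 to J_2; and zero in all other components. Then T²∘C = 0 and the triple (X, Y, C) is indecomposable. (In the paper this is the family with (s, t) = (m, k) for 3 ≤ k ≤ m−1 and (x, y) = (n, k′) for 3 ≤ k′ ≤ n−1.) -/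
open Polynomial

section

open scoped Matrix

lemma Polynomial.coeff_eq_zero_of_X_pow_dvd_X_pow_mul {R : Type*} [Semiring R] {p : R[X]}
    {m n k : ℕ} (h : X ^ m ∣ X ^ n * p) (hk : k + n < m) : p.coeff k = 0 := by
  rw [← coeff_X_pow_mul p n k]
  exact (X_pow_dvd_iff.mp h) _ hk

lemma LinearMap.isNilpotent_of_forall_exists_eq_smul {R M : Type*} [CommSemiring R]
    [AddCommMonoid M] [Module R M] {F : M →ₗ[R] M} {r : R} {n : ℕ}
    (hF : ∀ v, ∃ w, F v = r • w) (hr : ∀ v : M, r ^ n • v = 0) : IsNilpotent F := by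
  have hpow : ∀ k v, ∃ w, (F ^ k) v = r ^ k • w := by
    intro k
    induction k with
    | zero => exact fun v => ⟨v, by simp⟩
    | succ k ih =>
      intro v
      obtain ⟨w, hw⟩ := hF v
      obtain ⟨w', hw'⟩ := ih w
      refine ⟨w', ?_⟩
      rw [pow_succ, Module.End.mul_apply, hw, map_smul, hw', smul_smul, pow_succ']
  refine ⟨n, LinearMap.ext fun v => ?_⟩
  obtain ⟨w, hw⟩ := hpow n v
  rw [hw, hr, zero_apply]

theorem Matrix.eq_smul_one_of_isIdempotentElem_of_isLowerTriangular {R : Type*} [CommRing R]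
    {M : Matrix (Fin 3) (Fin 3) R} {c : R} (hM : IsIdempotentElem M)
    (hlow : M.IsLowerTriangular) (hdiag : ∀ i, M i i = c) :
    IsIdempotentElem c ∧ M = c • 1 := by
  have h01 : M 0 1 = 0 := hlow (by decide)
  have h02 : M 0 2 = 0 := hlow (by decide)
  have h12 : M 1 2 = 0 := hlow (by decide)
  have e : ∀ i j, ∑ k, M i k * M k j = M i j := fun i j => by
    rw [← Matrix.mul_apply, hM]
  have e00 := e 0 0
  have e10 := e 1 0
  have e21 := e 2 1
  have e20 := e 2 0
  simp only [Fin.sum_univ_three, h01, h02, h12, hdiag] at e00 e10 e21 e20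
  have hc : c * c = c := by linear_combination e00
  have h10 : M 1 0 = 0 := by linear_combination (2 * c - 1) * e10 - 4 * M 1 0 * hc
  have h21 : M 2 1 = 0 := by linear_combination (2 * c - 1) * e21 - 4 * M 2 1 * hc
  have h20 : M 2 0 = 0 := by
    linear_combination (2 * c - 1) * e20 - 4 * M 2 0 * hc - (2 * c - 1) * M 1 0 * h21
  refine ⟨hc, Matrix.ext fun i j => ?_⟩
  fin_cases i <;> fin_cases j <;> simp [*]

variable {K : Type*} [Field K]

lemma mulTpow_mk {a b e : ℕ} (h : b ≤ e + a) (p : K[X]) :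
    mulTpow K a b e (Ideal.Quotient.mk _ p) = Ideal.Quotient.mk _ (X ^ e * p) := by
  rw [mulTpow, dif_pos h]
  rfl

lemma X_pow_smul_mulTpow {a b e n : ℕ} (h : b ≤ e + n) (v : J K a) :
    (X : K[X]) ^ n • mulTpow K a b e v = 0 := by
  by_cases hb : b ≤ e + a
  · obtain ⟨p, rfl⟩ := Ideal.Quotient.mk_surjective v
    rw [mulTpow_mk hb, ← Ideal.Quotient.mk_eq_mk, ← Submodule.Quotient.mk_smul,
      Ideal.Quotient.mk_eq_mk, Ideal.Quotient.eq_zero_iff_dvd, smul_eq_mul, ← mul_assoc,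
      ← pow_add]
    exact (pow_dvd_pow X (by omega)).mul_right p
  · simp [mulTpow, hb]

lemma J.nontrivial_s15 {a : ℕ} (ha : a ≠ 0) : Nontrivial (J K a) :=
  Ideal.Quotient.nontrivial_iff.mpr (by
    rw [Ne, Ideal.span_singleton_eq_top, isUnit_pow_iff ha]; exact not_isUnit_X)

variable {a b c d e f : ℕ}

noncomputable def tripleMk : (Fin 3 → K[X]) →ₗ[K[X]] J K a × J K b × J K c :=
  (Submodule.mkQ _ ∘ₗ LinearMap.proj 0).prod
    ((Submodule.mkQ _ ∘ₗ LinearMap.proj 1).prod (Submodule.mkQ _ ∘ₗ LinearMap.proj 2))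

@[simp]
lemma tripleMk_apply (v : Fin 3 → K[X]) :
    (tripleMk v : J K a × J K b × J K c) =
      (Submodule.Quotient.mk (v 0), Submodule.Quotient.mk (v 1), Submodule.Quotient.mk (v 2)) :=
  rfl

lemma tripleMk_surjective : Function.Surjective (tripleMk : _ → J K a × J K b × J K c) := by
  rintro ⟨u, v, w⟩
  obtain ⟨p, rfl⟩ := Submodule.Quotient.mk_surjective _ u
  obtain ⟨q, rfl⟩ := Submodule.Quotient.mk_surjective _ v
  obtain ⟨r, rfl⟩ := Submodule.Quotient.mk_surjective _ w
  exact ⟨![p, q, r], rfl⟩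

lemma tripleMk_eq_zero_iff {v : Fin 3 → K[X]} :
    (tripleMk v : J K a × J K b × J K c) = 0 ↔ ∀ i, X ^ ![a, b, c] i ∣ v i := by
  simp [Fin.forall_fin_succ, Prod.ext_iff, Ideal.Quotient.eq_zero_iff_dvd]

lemma X_pow_smul_triple_eq_zero {n : ℕ} (ha : a ≤ n) (hb : b ≤ n) (hc : c ≤ n)
    (w : J K a × J K b × J K c) : (X : K[X]) ^ n • w = 0 := by
  obtain ⟨v, rfl⟩ := tripleMk_surjective w
  rw [← map_smul, tripleMk_eq_zero_iff]
  intro i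
  fin_cases i <;> exact (pow_dvd_pow X ‹_›).mul_right _

/-- `A` is a matrix of `F`: the `j`-th column of `A` represents the image of the `j`-th
generator of `J_a × J_b × J_c`. -/
def HasMatrix (F : J K a × J K b × J K c →ₗ[K[X]] J K d × J K e × J K f)
    (A : Matrix (Fin 3) (Fin 3) K[X]) : Prop :=
  ∀ v, F (tripleMk v) = tripleMk (A *ᵥ v)

lemma exists_hasMatrix (F : J K a × J K b × J K c →ₗ[K[X]] J K d × J K e × J K f) :
    ∃ A, HasMatrix F A := by
  obtain ⟨L, hL⟩ := Module.projective_lifting_property tripleMk (F ∘ₗ tripleMk)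
    tripleMk_surjective
  exact ⟨LinearMap.toMatrix' L, fun v => by
    rw [LinearMap.toMatrix'_mulVec, ← LinearMap.comp_apply, ← hL, LinearMap.comp_apply]⟩

namespace HasMatrix

variable {F : J K a × J K b × J K c →ₗ[K[X]] J K d × J K e × J K f}
  {A A' : Matrix (Fin 3) (Fin 3) K[X]}

lemma comp {g h k : ℕ} {G : J K d × J K e × J K f →ₗ[K[X]] J K g × J K h × J K k}
    {B : Matrix (Fin 3) (Fin 3) K[X]} (hB : HasMatrix G B) (hA : HasMatrix F A) :
    HasMatrix (G ∘ₗ F) (B * A) := fun v => by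
  rw [LinearMap.comp_apply, hA, hB, Matrix.mulVec_mulVec]

lemma dvd (hA : HasMatrix F A) (i j : Fin 3) :
    X ^ ![d, e, f] i ∣ X ^ ![a, b, c] j * A i j := by
  have h0 : (tripleMk (Pi.single j (X ^ ![a, b, c] j)) : J K a × J K b × J K c) = 0 := by
    rw [tripleMk_eq_zero_iff]
    intro i
    rcases eq_or_ne i j with rfl | hij
    · simp
    · simp [hij]
  have := congrArg F h0
  rw [hA, map_zero, tripleMk_eq_zero_iff] at this
  simpa [mul_comm] using this i

lemma coeff_eq_zero (hA : HasMatrix F A) {i j : Fin 3} {k : ℕ}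
    (hk : k + ![a, b, c] j < ![d, e, f] i) : (A i j).coeff k = 0 :=
  coeff_eq_zero_of_X_pow_dvd_X_pow_mul (hA.dvd i j) hk

lemma coeff_eq (hA : HasMatrix F A) (hA' : HasMatrix F A') {i j : Fin 3} {k : ℕ}
    (hk : k < ![d, e, f] i) : (A i j).coeff k = (A' i j).coeff k := by
  have h := (hA (Pi.single j 1)).symm.trans (hA' (Pi.single j 1))
  rw [← sub_eq_zero, ← map_sub, ← Matrix.sub_mulVec, tripleMk_eq_zero_iff] at h
  rw [← sub_eq_zero, ← coeff_sub]
  exact X_pow_dvd_iff.mp (by simpa using h i) k hk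

end HasMatrix

section Endomorphism

variable {F : J K a × J K b × J K c →ₗ[K[X]] J K a × J K b × J K c}
  {A : Matrix (Fin 3) (Fin 3) K[X]}

namespace HasMatrix

lemma one_sub (hA : HasMatrix F A) : HasMatrix (1 - F) (1 - A) := fun v => by
  rw [LinearMap.sub_apply, hA, Module.End.one_apply, Matrix.sub_mulVec, Matrix.one_mulVec,
    map_sub]

lemma isIdempotentElem_map_constantCoeff (ha : 0 < a) (hb : 0 < b) (hc : 0 < c)
    (hF : IsIdempotentElem F) (hA : HasMatrix F A) :
    IsIdempotentElem (A.map constantCoeff) := by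
  have hAA : HasMatrix F (A * A) := hF ▸ hA.comp hA
  rw [IsIdempotentElem, ← Matrix.map_mul]
  ext i j
  simp only [Matrix.map_apply, constantCoeff_apply]
  exact hAA.coeff_eq hA (by fin_cases i <;> simpa)

lemma isLowerTriangular_map_constantCoeff (hba : b < a) (hcb : c < b) (hA : HasMatrix F A) :
    (A.map constantCoeff).IsLowerTriangular := by
  intro i j hij
  rw [OrderDual.toDual_lt_toDual] at hij
  simp only [Matrix.map_apply, constantCoeff_apply]
  refine hA.coeff_eq_zero ?_
  fin_cases i <;> fin_cases j <;> simp at hij ⊢ <;> omega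

lemma exists_eq_X_smul (hA : HasMatrix F A) (h0 : A.map constantCoeff = 0)
    (w : J K a × J K b × J K c) : ∃ w', F w = (X : K[X]) • w' := by
  obtain ⟨v, rfl⟩ := tripleMk_surjective w
  have hX : ∀ i, X ∣ (A *ᵥ v) i := fun i => by
    rw [X_dvd_iff, ← constantCoeff_apply, RingHom.map_mulVec, h0, Matrix.zero_mulVec,
      Pi.zero_apply]
  choose q hq using hX
  refine ⟨tripleMk q, ?_⟩
  rw [hA, ← map_smul]
  congr 1
  funext i
  exact hq i

lemma eq_zero_of_isIdempotentElem (hF : IsIdempotentElem F) (hA : HasMatrix F A)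
    (h0 : A.map constantCoeff = 0) : F = 0 :=
  hF.eq_zero_of_isNilpotent <| LinearMap.isNilpotent_of_forall_exists_eq_smul
    (hA.exists_eq_X_smul h0)
    (X_pow_smul_triple_eq_zero (n := a + b + c) (by omega) (by omega) (by omega))

lemma eq_one_of_isIdempotentElem (hF : IsIdempotentElem F) (hA : HasMatrix F A)
    (h1 : A.map constantCoeff = 1) : F = 1 := by
  refine (sub_eq_zero.mp (hA.one_sub.eq_zero_of_isIdempotentElem hF.one_sub ?_)).symm
  rw [Matrix.map_sub _ (map_sub _), h1, Matrix.map_one _ (map_zero _) (map_one _), sub_self]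

end HasMatrix

end Endomorphism

noncomputable def tripleMap (K : Type*) [Field K] (s t x y : ℕ) :
    J K s × J K t × J K 1 →ₗ[K[X]] J K x × J K y × J K 2 :=
  LinearMap.prod
    ((mulTpow K s x (x - 2)).coprod
      ((0 : J K t →ₗ[K[X]] J K x).coprod (0 : J K 1 →ₗ[K[X]] J K x)))
    (LinearMap.prod
      ((mulTpow K s y (y - 2)).coprod
        ((mulTpow K t y (y - 2)).coprod (0 : J K 1 →ₗ[K[X]] J K y)))
      ((0 : J K s →ₗ[K[X]] J K 2).coprod
        ((mulTpow K t 2 0).coprod (mulTpow K 1 2 1))))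

noncomputable def tripleMatrix (K : Type*) [Field K] (x y : ℕ) : Matrix (Fin 3) (Fin 3) K[X] :=
  !![X ^ (x - 2), 0, 0; X ^ (y - 2), X ^ (y - 2), 0; 0, 1, X]

variable {s t x y : ℕ}

lemma X_sq_smul_tripleMap (v : J K s × J K t × J K 1) :
    (X : K[X]) ^ 2 • tripleMap K s t x y v = 0 := by
  simp [tripleMap, X_pow_smul_mulTpow (show x ≤ x - 2 + 2 by omega),
    X_pow_smul_mulTpow (show y ≤ y - 2 + 2 by omega),
    X_pow_smul_mulTpow (show 2 ≤ 0 + 2 by omega), X_pow_smul_mulTpow (show 2 ≤ 1 + 2 by omega)]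

lemma hasMatrix_tripleMap (hs : 2 ≤ s) (ht : 2 ≤ t) :
    HasMatrix (tripleMap K s t x y) (tripleMatrix K x y) := fun v => by
  simp [tripleMap, tripleMatrix, dotProduct, Fin.sum_univ_three,
    mulTpow_mk (show x ≤ x - 2 + s by omega), mulTpow_mk (show y ≤ y - 2 + s by omega),
    mulTpow_mk (show y ≤ y - 2 + t by omega), mulTpow_mk (show 2 ≤ 0 + t by omega),
    mulTpow_mk (show 2 ≤ 1 + 1 by omega)]

lemma diag_coeff_zero_eq_of_comp_eq (hts : t < s) (ht : 3 ≤ t) (hyx : y < x) (hy : 3 ≤ y)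
    {F : J K s × J K t × J K 1 →ₗ[K[X]] J K s × J K t × J K 1}
    {G : J K x × J K y × J K 2 →ₗ[K[X]] J K x × J K y × J K 2}
    {A B : Matrix (Fin 3) (Fin 3) K[X]} (hA : HasMatrix F A) (hB : HasMatrix G B)
    (hGC : G ∘ₗ tripleMap K s t x y = tripleMap K s t x y ∘ₗ F) (i : Fin 3) :
    (A i i).coeff 0 = (A 2 2).coeff 0 ∧ (B i i).coeff 0 = (A 2 2).coeff 0 := by
  have hC : HasMatrix (tripleMap K s t x y) (tripleMatrix K x y) :=
    hasMatrix_tripleMap (by omega) (by omega)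
  have hBC := hB.comp hC
  rw [hGC] at hBC
  have hentry : ∀ i j k, k < ![x, y, 2] i →
      ((tripleMatrix K x y * A) i j).coeff k = ((B * tripleMatrix K x y) i j).coeff k :=
    fun i j k hk => (hC.comp hA).coeff_eq hBC hk
  have a01 : (A 0 1).coeff 0 = 0 := hA.coeff_eq_zero (by simp; omega)
  have a02 : (A 0 2).coeff 1 = 0 := hA.coeff_eq_zero (by simp; omega)
  have a12 : (A 1 2).coeff 1 = 0 := hA.coeff_eq_zero (by simp; omega)
  -- Entry `(i, j)` is read at the exponent of `X` in the relevant entry of `tripleMatrix`, where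
  -- the constant terms of `A` and `B` show up.
  have e20 := hentry 2 0 0 (by simp)
  have e02 := hentry 0 2 (x - 1) (by simp; omega)
  have e01 := hentry 0 1 (x - 2) (by simp; omega)
  have e00 := hentry 0 0 (x - 2) (by simp; omega)
  have e12 := hentry 1 2 (y - 1) (by simp; omega)
  have e11 := hentry 1 1 (y - 2) (by simp; omega)
  have e10 := hentry 1 0 (y - 2) (by simp; omega)
  have e21 := hentry 2 1 0 (by simp)
  have e22 := hentry 2 2 1 (by simp)
  simp only [tripleMatrix, Fin.isValue, Matrix.mul_apply, Matrix.of_apply, Matrix.cons_val',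
    Matrix.cons_val_fin_one, Matrix.cons_val, Matrix.cons_val_one, Fin.sum_univ_three,
    Matrix.cons_val_zero, zero_mul, one_mul, zero_add, coeff_add, mul_coeff_zero, coeff_X_zero,
    add_zero, mul_zero, coeff_X_pow, show 0 ≠ x - 2 by omega, ↓reduceIte,
    show 0 ≠ y - 2 by omega, show x - 1 = x - 2 + 1 by omega, coeff_X_pow_mul',
    le_add_iff_nonneg_right, zero_le, add_tsub_cancel_left, a02, coeff_mul_X, Std.le_refl,
    tsub_self, a01, mul_one, coeff_mul_X_pow', tsub_le_iff_right, show y ≤ x - 2 + 2 by omega,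
    show y - 1 = y - 2 + 1 by omega, a12, show ¬x ≤ y - 2 + 2 by omega,
    coeff_X_mul] at e20 e02 e01 e00 e12 e11 e10 e21 e22
  rw [← e02, add_zero] at e01
  rw [← e01, add_zero] at e00
  rw [← e12, add_zero] at e11
  rw [e20, add_zero] at e10
  have hA11 : (A 1 1).coeff 0 = (A 2 2).coeff 0 := e21.trans e22.symm
  have hB11 : (B 1 1).coeff 0 = (A 2 2).coeff 0 := e11.symm.trans hA11
  have hA00 : (A 0 0).coeff 0 = (A 2 2).coeff 0 := e10.trans hB11
  have hB00 : (B 0 0).coeff 0 = (A 2 2).coeff 0 := e00.symm.trans hA00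
  fin_cases i
  exacts [⟨hA00, hB00⟩, ⟨hA11, hB11⟩, ⟨rfl, e22.symm⟩]

end

/-- For `s > t ≥ 3`, `xx > y ≥ 3`, the map `C : J_s ⊕ J_t ⊕ J_1 → J_xx ⊕ J_y ⊕ J_2`
with components `T^{xx-2} : J_s → J_xx`, `T^{y-2} : J_s → J_y`, `T^{y-2} : J_t → J_y`,
the canonical reduction `J_t → J_2`, `T : J_1 → J_2`, and zero in all other components,
satisfies `T² ∘ C = 0`, and the triple `(J_s ⊕ J_t ⊕ J_1, J_xx ⊕ J_y ⊕ J_2, C)` is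
indecomposable. -/
theorem triple_3x3_indecomposable (K : Type*) [Field K] (s t xx y : ℕ)
    (hts : t < s) (ht : 3 ≤ t) (hyx : y < xx) (hy : 3 ≤ y) :
    (∀ v, ((X : Polynomial K) ^ 2) •
      (LinearMap.prod
        ((mulTpow K s xx (xx - 2)).coprod
          ((0 : J K t →ₗ[Polynomial K] J K xx).coprod (0 : J K 1 →ₗ[Polynomial K] J K xx)))
        (LinearMap.prod
          ((mulTpow K s y (y - 2)).coprod
            ((mulTpow K t y (y - 2)).coprod (0 : J K 1 →ₗ[Polynomial K] J K y)))
          ((0 : J K s →ₗ[Polynomial K] J K 2).coprod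
            ((mulTpow K t 2 0).coprod (mulTpow K 1 2 1))))) v = 0) ∧
    TripleIndecomposable
      (LinearMap.prod
        ((mulTpow K s xx (xx - 2)).coprod
          ((0 : J K t →ₗ[Polynomial K] J K xx).coprod (0 : J K 1 →ₗ[Polynomial K] J K xx)))
        (LinearMap.prod
          ((mulTpow K s y (y - 2)).coprod
            ((mulTpow K t y (y - 2)).coprod (0 : J K 1 →ₗ[Polynomial K] J K y)))
          ((0 : J K s →ₗ[Polynomial K] J K 2).coprod
            ((mulTpow K t 2 0).coprod (mulTpow K 1 2 1))))) := by
  refine ⟨X_sq_smul_tripleMap, Or.inl ?_, fun F G hGC hFF hGG => ?_⟩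
  · have := J.nontrivial_s15 (K := K) one_ne_zero
    infer_instance
  obtain ⟨A, hA⟩ := exists_hasMatrix F
  obtain ⟨B, hB⟩ := exists_hasMatrix G
  have hdiag := diag_coeff_zero_eq_of_comp_eq hts ht hyx hy hA hB hGC
  obtain ⟨hc, hA₀⟩ := Matrix.eq_smul_one_of_isIdempotentElem_of_isLowerTriangular
    (hA.isIdempotentElem_map_constantCoeff (by omega) (by omega) one_pos hFF)
    (hA.isLowerTriangular_map_constantCoeff hts (by omega)) (fun i => (hdiag i).1)
  obtain ⟨-, hB₀⟩ := Matrix.eq_smul_one_of_isIdempotentElem_of_isLowerTriangular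
    (hB.isIdempotentElem_map_constantCoeff (by omega) (by omega) two_pos hGG)
    (hB.isLowerTriangular_map_constantCoeff hyx (by omega)) (fun i => (hdiag i).2)
  rcases IsIdempotentElem.iff_eq_zero_or_one.mp hc with h0 | h1
  · rw [h0, zero_smul] at hA₀ hB₀
    exact .inl ⟨hA.eq_zero_of_isIdempotentElem hFF hA₀,
      hB.eq_zero_of_isIdempotentElem hGG hB₀⟩
  · rw [h1, one_smul] at hA₀ hB₀
    exact .inr ⟨hA.eq_one_of_isIdempotentElem hFF hA₀,
      hB.eq_one_of_isIdempotentElem hGG hB₀⟩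
end
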